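/- If U_i ∈ 𝕌_{n_i,d}, U_j ∈ 𝕌_{n_j,d}, U_k ∈ 𝕌_{n_k,d} are universe matchings and X_ij = U_i U_jᵀ etc., then the partial cycle-consistency inequality X_ik X_kj ≤ X_ij holds entrywise. -/
import Mathlib


open Matrix

def IsUniverseMatching {n d : ℕ} (U : Matrix (Fin n) (Fin d) ℝ) : Prop :=
  (∀ a b, U a b = 0 ∨ U a b = 1) ∧ (∀ a, ∑ b, U a b = 1) ∧ (∀ b, ∑ a, U a b ≤ 1)

lemma um_nonneg {n d : ℕ} {U : Matrix (Fin n) (Fin d) ℝ}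
    (hU : IsUniverseMatching U) (a : Fin n) (b : Fin d) : 0 ≤ U a b := by
  rcases hU.1 a b with h | h <;> simp [h]

lemma um_offdiag {n d : ℕ} {U : Matrix (Fin n) (Fin d) ℝ}
    (hU : IsUniverseMatching U) (c : Fin n) {p q : Fin d} (hpq : p ≠ q) :
    U c p * U c q = 0 := by
  rcases hU.1 c p with h | h
  · simp [h]
  rcases hU.1 c q with h' | h'
  · simp [h']
  exfalso
  have h2 : (2 : ℝ) ≤ ∑ b, U c b := by
    calc (2 : ℝ) = U c p + U c q := by rw [h, h']; norm_num
    _ = ∑ b ∈ ({p, q} : Finset (Fin d)), U c b := (Finset.sum_pair hpq).symm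
    _ ≤ ∑ b, U c b := Finset.sum_le_sum_of_subset_of_nonneg (Finset.subset_univ _)
        (fun b _ _ => um_nonneg hU c b)
  linarith [hU.2.1 c]

theorem stmt_3 (ni nj nk d : ℕ)
    (Ui : Matrix (Fin ni) (Fin d) ℝ) (Uj : Matrix (Fin nj) (Fin d) ℝ)
    (Uk : Matrix (Fin nk) (Fin d) ℝ)
    (hUi : IsUniverseMatching Ui) (hUj : IsUniverseMatching Uj)
    (hUk : IsUniverseMatching Uk) :
    ∀ a b, ((Ui * Ukᵀ) * (Uk * Ujᵀ)) a b ≤ (Ui * Ujᵀ) a b := by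
  intro a b
  simp only [mul_apply, transpose_apply]
  calc ∑ c, (∑ p, Ui a p * Uk c p) * (∑ q, Uk c q * Uj b q)
      = ∑ c, ∑ p, ∑ q, (Ui a p * Uk c p) * (Uk c q * Uj b q) := by
        refine Finset.sum_congr rfl fun c _ => ?_
        rw [Finset.sum_mul_sum]
    _ = ∑ c, ∑ p, Ui a p * Uk c p * Uj b p := by
        refine Finset.sum_congr rfl fun c _ => Finset.sum_congr rfl fun p _ => ?_
        rw [Finset.sum_eq_single p]
        · rcases hUk.1 c p with h | h <;> simp [h]
        · intro q _ hq
          have h0 : Uk c p * Uk c q = 0 := um_offdiag hUk c (Ne.symm hq)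
          calc (Ui a p * Uk c p) * (Uk c q * Uj b q)
              = Ui a p * Uj b q * (Uk c p * Uk c q) := by ring
            _ = 0 := by rw [h0, mul_zero]
        · simp
    _ = ∑ p, Ui a p * Uj b p * ∑ c, Uk c p := by
        rw [Finset.sum_comm]
        refine Finset.sum_congr rfl fun p _ => ?_
        rw [Finset.mul_sum]
        exact Finset.sum_congr rfl fun c _ => by ring
    _ ≤ ∑ p, Ui a p * Uj b p := by
        refine Finset.sum_le_sum fun p _ => ?_
        have h1 : ∑ c, Uk c p ≤ 1 := hUk.2.2 p
        have h2 : 0 ≤ Ui a p * Uj b p := mul_nonneg (um_nonneg hUi a p) (um_nonneg hUj b p)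
        calc Ui a p * Uj b p * ∑ c, Uk c p ≤ Ui a p * Uj b p * 1 :=
              mul_le_mul_of_nonneg_left h1 h2
          _ = Ui a p * Uj b p := mul_one _
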